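/- arXiv:2603.15251 — 2 statements merged into one kernel-verified Lean document; each statement's English description precedes it below -/
import Mathlib

section
/- Let X be a uniformly random permutation of a random vector Y in [k]^k (the permutation independent of Y), and let v: [k]^k → {0,1}^k be the collision indicator map, v(x)_i = 1 iff ∃ j ≠ i with x_j = x_i. If the conditional distribution Pr(Y = y | v(Y) = v) depends on v only through its Hamming weight, then H(X | v(X)) = H(Y | v(Y)). -/
open Finset

/-- Collision-indicator pattern of `x ∈ [k]^k`: `coll x i = true` iff some other
coordinate shares the value `x i`. -/
def coll (k : ℕ) (x : Fin k → Fin k) : Fin k → Bool :=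
  fun i => decide (∃ j, j ≠ i ∧ x j = x i)

/-- Probability that the collision pattern of a `q`-distributed vector equals `b`. -/
noncomputable def patProb (k : ℕ) (q : (Fin k → Fin k) → ℝ) (b : Fin k → Bool) : ℝ :=
  ∑ y : Fin k → Fin k, if coll k y = b then q y else 0

/-- Conditional entropy `H(Y | v(Y))` of a `q`-distributed vector given its
collision pattern, in bits. -/
noncomputable def condEnt (k : ℕ) (q : (Fin k → Fin k) → ℝ) : ℝ :=
  -∑ y : Fin k → Fin k, q y * Real.logb 2 (q y / patProb k q (coll k y))

/-- Distribution of `X = (Y_{π(1)},…,Y_{π(k)})` for `Y ~ q` and `π` a uniformly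
random permutation independent of `Y`. -/
noncomputable def permuted (k : ℕ) (q : (Fin k → Fin k) → ℝ) : (Fin k → Fin k) → ℝ :=
  fun x => (∑ π : Equiv.Perm (Fin k), q (fun i => x (π i))) / (Nat.factorial k : ℝ)

/-- Hamming weight of a pattern. -/
def wtv (k : ℕ) (b : Fin k → Bool) : ℕ := (Finset.univ.filter (fun i => b i = true)).card

/-- Size of the fiber of `coll` over `b`. -/
noncomputable def Nval (k : ℕ) (b : Fin k → Bool) : ℕ :=
  (Finset.univ.filter (fun x : Fin k → Fin k => coll k x = b)).card

/-- Average of `patProb` over permuted patterns. -/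
noncomputable def Sval (k : ℕ) (q : (Fin k → Fin k) → ℝ) (b : Fin k → Bool) : ℝ :=
  (∑ π : Equiv.Perm (Fin k), patProb k q (fun i => b (π i))) / (Nat.factorial k : ℝ)

lemma coll_comp (k : ℕ) (x : Fin k → Fin k) (π : Equiv.Perm (Fin k)) :
    coll k (fun i => x (π i)) = fun i => coll k x (π i) := by
  funext i
  simp only [coll, decide_eq_decide]
  constructor
  · rintro ⟨j, hj, he⟩
    exact ⟨π j, fun h => hj (π.injective h), he⟩
  · rintro ⟨j, hj, he⟩
    refine ⟨π.symm j, fun h => hj ?_, by simpa using he⟩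
    simpa using congrArg π h

lemma wt_comp (k : ℕ) (b : Fin k → Bool) (π : Equiv.Perm (Fin k)) :
    wtv k (fun i => b (π i)) = wtv k b := by
  unfold wtv
  apply Finset.card_bij (fun i _ => π i)
  · intro a ha
    simp only [Finset.mem_filter, Finset.mem_univ, true_and] at ha ⊢
    exact ha
  · intro a _ a' _ h
    exact π.injective h
  · intro b' hb'
    simp only [Finset.mem_filter, Finset.mem_univ, true_and] at hb'
    exact ⟨π.symm b', by simp [hb'], by simp⟩

lemma fiber_card (k : ℕ) (b : Fin k → Bool) (π : Equiv.Perm (Fin k)) :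
    Nval k (fun i => b (π i)) = Nval k b := by
  unfold Nval
  apply Finset.card_bij (fun x _ => fun i => x (π.symm i))
  · intro x hx
    simp only [Finset.mem_filter, Finset.mem_univ, true_and] at hx ⊢
    rw [coll_comp, hx]
    funext i; simp
  · intro x _ x' _ h
    funext i
    have := congrFun h (π i)
    simpa using this
  · intro z hz
    simp only [Finset.mem_filter, Finset.mem_univ, true_and] at hz
    refine ⟨fun i => z (π i), ?_, ?_⟩
    · simp only [Finset.mem_filter, Finset.mem_univ, true_and]
      rw [coll_comp, hz]
    · funext i
      exact congrArg z (π.apply_symm_apply i)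

lemma patProb_fiber (k : ℕ) (r : (Fin k → Fin k) → ℝ) (b : Fin k → Bool) :
    patProb k r b = ∑ x ∈ Finset.univ.filter (fun x => coll k x = b), r x := by
  rw [patProb, Finset.sum_filter]

/-- If the conditional distribution `Pr(Y = y | v(Y) = v)` depends on the pattern
`v` only through its Hamming weight, then `H(X | v(X)) = H(Y | v(Y))`, where `X`
is a uniformly random coordinate permutation of `Y`. -/
theorem stmt12 (k : ℕ) (hk : 1 ≤ k) (q : (Fin k → Fin k) → ℝ)
    (hq0 : ∀ y, 0 ≤ q y) (hq1 : ∑ y : Fin k → Fin k, q y = 1)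
    (hcond : ∃ c : ℕ → ℝ, ∀ y,
      q y = c ((Finset.univ.filter (fun i => coll k y i = true)).card)
              * patProb k q (coll k y)) :
    condEnt k (permuted k q) = condEnt k q := by
  classical
  obtain ⟨c, hc0⟩ := hcond
  have hc : ∀ y, q y = c (wtv k (coll k y)) * patProb k q (coll k y) := hc0
  have hfact : (Nat.factorial k : ℝ) ≠ 0 := Nat.cast_ne_zero.2 (Nat.factorial_ne_zero k)
  -- formula for permuted q
  have hq' : ∀ x, permuted k q x = c (wtv k (coll k x)) * Sval k q (coll k x) := by
    intro x
    rw [permuted, Sval]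
    have h1 : ∀ π : Equiv.Perm (Fin k),
        q (fun i => x (π i))
          = c (wtv k (coll k x)) * patProb k q (fun i => coll k x (π i)) := by
      intro π
      rw [hc (fun i => x (π i)), coll_comp, wt_comp]
    rw [Finset.sum_congr rfl (fun π _ => h1 π), ← Finset.mul_sum, mul_div_assoc]
  -- patProb of permuted q
  have hpat' : ∀ b, patProb k (permuted k q) b
      = (Nval k b : ℝ) * (c (wtv k b) * Sval k q b) := by
    intro b
    rw [patProb_fiber]
    rw [Finset.sum_congr rfl (fun x hx => by
      simp only [Finset.mem_filter, Finset.mem_univ, true_and] at hx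
      rw [hq' x, hx])]
    rw [Finset.sum_const, nsmul_eq_mul]
    rfl
  -- key identity
  have hkey : ∀ b : Fin k → Bool, Sval k q b ≠ 0 → (Nval k b : ℝ) * c (wtv k b) = 1 := by
    intro b hSb
    have : ∃ π : Equiv.Perm (Fin k), patProb k q (fun i => b (π i)) ≠ 0 := by
      by_contra h
      push_neg at h
      apply hSb
      rw [Sval]
      rw [Finset.sum_congr rfl (fun π _ => h π), Finset.sum_const, smul_zero, zero_div]
    obtain ⟨π, hπ⟩ := this
    have h1 : patProb k q (fun i => b (π i))
        = ((Nval k b : ℝ) * c (wtv k b)) * patProb k q (fun i => b (π i)) := by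
      conv_lhs => rw [patProb_fiber]
      rw [Finset.sum_congr rfl (fun y hy => by
        simp only [Finset.mem_filter, Finset.mem_univ, true_and] at hy
        rw [hc y, hy, wt_comp])]
      rw [Finset.sum_const, nsmul_eq_mul]
      rw [show (Finset.univ.filter
            fun y : Fin k → Fin k => coll k y = fun i => b (π i)).card
            = Nval k (fun i => b (π i)) from rfl, fiber_card]
      ring
    exact mul_right_cancel₀ hπ (h1.symm.trans (one_mul _).symm)
  -- ratio for permuted q
  have hratio' : ∀ x, permuted k q x ≠ 0 →
      permuted k q x / patProb k (permuted k q) (coll k x) = c (wtv k (coll k x)) := by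
    intro x hx
    have hcs : c (wtv k (coll k x)) * Sval k q (coll k x) ≠ 0 := by rw [← hq' x]; exact hx
    have hSb : Sval k q (coll k x) ≠ 0 := fun h => hcs (by rw [h, mul_zero])
    have hk1 := hkey (coll k x) hSb
    have hN0 : (Nval k (coll k x) : ℝ) ≠ 0 := by
      intro h; rw [h, zero_mul] at hk1; exact one_ne_zero hk1.symm
    rw [hq' x, hpat' (coll k x)]
    rw [div_eq_iff (mul_ne_zero hN0 hcs)]
    linear_combination (-(c (wtv k (coll k x)) * Sval k q (coll k x))) * hk1
  -- ratio for q
  have hratio : ∀ y, q y ≠ 0 → q y / patProb k q (coll k y) = c (wtv k (coll k y)) := by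
    intro y hy
    have hle : q y ≤ patProb k q (coll k y) := by
      rw [patProb_fiber]
      exact Finset.single_le_sum (fun z _ => hq0 z) (by simp)
    have hppos : patProb k q (coll k y) ≠ 0 := by
      intro h
      exact hy (le_antisymm (h ▸ hle) (hq0 y))
    rw [hc y, mul_div_assoc, div_self hppos, mul_one]
  -- rewrite both entropies
  have hent' : condEnt k (permuted k q)
      = -∑ x : Fin k → Fin k, permuted k q x * Real.logb 2 (c (wtv k (coll k x))) := by
    rw [condEnt]
    congr 1
    apply Finset.sum_congr rfl
    intro x _
    by_cases hx : permuted k q x = 0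
    · rw [hx, zero_mul, zero_mul]
    · rw [hratio' x hx]
  have hent : condEnt k q
      = -∑ y : Fin k → Fin k, q y * Real.logb 2 (c (wtv k (coll k y))) := by
    rw [condEnt]
    congr 1
    apply Finset.sum_congr rfl
    intro y _
    by_cases hy : q y = 0
    · rw [hy, zero_mul, zero_mul]
    · rw [hratio y hy]
  rw [hent', hent]
  congr 1
  -- permutation averaging
  have hinner : ∀ π : Equiv.Perm (Fin k),
      (∑ x : Fin k → Fin k, q (fun i => x (π i)) * Real.logb 2 (c (wtv k (coll k x))))
        = ∑ y : Fin k → Fin k, q y * Real.logb 2 (c (wtv k (coll k y))) := by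
    intro π
    refine Fintype.sum_equiv (Equiv.arrowCongr π.symm (Equiv.refl (Fin k))) _ _ ?_
    intro x
    have he : (Equiv.arrowCongr π.symm (Equiv.refl (Fin k))) x = fun i => x (π i) := by
      funext i; simp [Equiv.arrowCongr]
    rw [he]
    congr 2
    rw [coll_comp, wt_comp]
  calc (∑ x : Fin k → Fin k, permuted k q x * Real.logb 2 (c (wtv k (coll k x))))
      = (∑ x : Fin k → Fin k, ∑ π : Equiv.Perm (Fin k),
          q (fun i => x (π i)) * Real.logb 2 (c (wtv k (coll k x)))) / (Nat.factorial k : ℝ) := by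
        rw [Finset.sum_div]
        apply Finset.sum_congr rfl
        intro x _
        rw [permuted, div_mul_eq_mul_div, Finset.sum_mul]
    _ = (∑ π : Equiv.Perm (Fin k), ∑ x : Fin k → Fin k,
          q (fun i => x (π i)) * Real.logb 2 (c (wtv k (coll k x)))) / (Nat.factorial k : ℝ) := by
        rw [Finset.sum_comm]
    _ = (∑ _π : Equiv.Perm (Fin k), ∑ y : Fin k → Fin k,
          q y * Real.logb 2 (c (wtv k (coll k y)))) / (Nat.factorial k : ℝ) := by
        rw [Finset.sum_congr rfl (fun π _ => hinner π)]
    _ = ∑ y : Fin k → Fin k, q y * Real.logb 2 (c (wtv k (coll k y))) := by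
        rw [Finset.sum_const, Finset.card_univ, Fintype.card_perm, Fintype.card_fin,
          nsmul_eq_mul, mul_div_assoc, mul_comm, div_mul_cancel₀ _ hfact]
end

section
/- Let Y = (Y_1,...,Y_k) be the urn sequence with the first w = ⌈λk⌉ draws without replacement and the rest with replacement, and let D = |{i : ∃ j ≠ i, Y_j = Y_i}|. Then E[D] ≥ k(1 − 1/e)(1 − λ − 1/k) whenever k ≥ 1 and λ + 1/k ≤ 1, where this lower bound may be replaced by max{k(1−1/e)(1−λ−1/k), 0} in general. -/
/-!
By linearity of expectation, `E[D]` is `k` minus the expected number of isolated coordinates.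
Conditionally on the `w` distinct values of the head (the draws without replacement), a head
coordinate is isolated only if no tail draw hits its value, which has probability
`(1 - 1/k)^(k-w)`, and a tail coordinate only if it avoids the head values and the other
`k - w - 1` tail draws, which has probability `((k-w)/k) (1 - 1/k)^(k-w-1)`.
Since `w = ⌈λk⌉ < λk + 1`, it then suffices to bound `k` minus these terms below by
`(1 - 1/e)(k - w)` when `w ≥ 1` and by `(1 - 1/e)(k - 1)` when `w = 0`; both follow from
`(1 - 1/k)^(k-1) ≤ e^(1/k - 1)`, Bernoulli's inequality and the convexity of `exp`.
-/

open Finset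

/-- Probability mass function of the urn sequence `Y ∈ [k]^k`: first `w` draws
without replacement from `[k]`, remaining `k - w` draws i.i.d. uniform on `[k]`. -/
noncomputable def urnPMF (k w : ℕ) : (Fin k → Fin k) → ℝ := fun y =>
  if ∀ i j : Fin k, (i : ℕ) < w → (j : ℕ) < w → y i = y j → i = j then
    ((Nat.factorial (k - w) : ℝ) / (Nat.factorial k : ℝ)) * (1 / (k : ℝ)) ^ (k - w)
  else 0

section FunctionCounting

variable {α β : Type*} [Fintype α] [DecidableEq α] [Fintype β] [DecidableEq β]

theorem card_filter_forall_ne (x : β) :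
    #{h : α → β | ∀ a, h a ≠ x} = (Fintype.card β - 1) ^ Fintype.card α := by
  have : ({h : α → β | ∀ a, h a ≠ x} : Finset _) = Fintype.piFinset fun _ => univ.erase x := by
    ext h
    simp [Fintype.mem_piFinset]
  rw [this, Fintype.card_piFinset, prod_const, card_erase_of_mem (mem_univ x), card_univ,
    card_univ]

theorem card_filter_isolated_le (S : Finset β) (a₀ : α) :
    #{h : α → β | h a₀ ∉ S ∧ ∀ a ≠ a₀, h a ≠ h a₀}
      ≤ (Fintype.card β - #S) * (Fintype.card β - 1) ^ (Fintype.card α - 1) := by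
  set T : β → Finset (α → β) := fun v =>
    Fintype.piFinset fun a => if a = a₀ then {v} else univ.erase v
  have hT : ∀ v, #(T v) = (Fintype.card β - 1) ^ (Fintype.card α - 1) := by
    intro v
    rw [Fintype.card_piFinset, ← mul_prod_erase univ _ (mem_univ a₀), if_pos rfl,
      card_singleton, one_mul, prod_congr rfl fun a ha => by rw [if_neg (ne_of_mem_erase ha)],
      prod_const, card_erase_of_mem (mem_univ v), card_erase_of_mem (mem_univ a₀), card_univ,
      card_univ]
  calc #{h : α → β | h a₀ ∉ S ∧ ∀ a ≠ a₀, h a ≠ h a₀}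
      ≤ #((univ \ S).biUnion T) := by
        refine card_le_card fun h hh => ?_
        rw [mem_filter] at hh
        refine mem_biUnion.2 ⟨h a₀, mem_sdiff.2 ⟨mem_univ _, hh.2.1⟩,
          Fintype.mem_piFinset.2 fun a => ?_⟩
        by_cases ha : a = a₀
        · subst ha
          simp
        · simpa [ha] using hh.2.2 a ha
    _ ≤ ∑ v ∈ univ \ S, #(T v) := card_biUnion_le
    _ = _ := by
      rw [sum_congr rfl fun v _ => hT v, sum_const, card_univ_sdiff, smul_eq_mul]

end FunctionCounting

section Urn

variable (k w : ℕ)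

/-- The indices of the draws made without replacement. -/
abbrev UrnHead := {i : Fin k // (i : ℕ) < w}

abbrev UrnTail := {i : Fin k // ¬ (i : ℕ) < w}

def urnSplit : (Fin k → Fin k) ≃ (UrnHead k w → Fin k) × (UrnTail k w → Fin k) :=
  Equiv.piEquivPiSubtypeProd _ _

variable {k w}

theorem urnSplit_symm_apply_head (g : UrnHead k w → Fin k) (h : UrnTail k w → Fin k)
    (i : UrnHead k w) : (urnSplit k w).symm (g, h) i = g i := by
  simp [urnSplit, Equiv.piEquivPiSubtypeProd_symm_apply, i.2]

theorem urnSplit_symm_apply_tail (g : UrnHead k w → Fin k) (h : UrnTail k w → Fin k)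
    (i : UrnTail k w) : (urnSplit k w).symm (g, h) i = h i := by
  simp [urnSplit, Equiv.piEquivPiSubtypeProd_symm_apply, i.2]

theorem card_urnHead (hw : w ≤ k) : Fintype.card (UrnHead k w) = w :=
  Fintype.card_fin_lt_of_le hw

theorem card_urnTail (hw : w ≤ k) : Fintype.card (UrnTail k w) = k - w := by
  rw [Fintype.card_subtype_compl, card_urnHead hw, Fintype.card_fin]

theorem urnPMF_eq (hw : w ≤ k) (y : Fin k → Fin k) :
    urnPMF k w y = if Function.Injective (urnSplit k w y).1
      then 1 / (k.descFactorial w * k ^ (k - w) : ℝ) else 0 := by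
  have hinj : (∀ i j : Fin k, (i : ℕ) < w → (j : ℕ) < w → y i = y j → i = j) ↔
      Function.Injective (urnSplit k w y).1 :=
    ⟨fun H a b hab => Subtype.ext (H a b a.2 b.2 hab),
      fun H i j hi hj hij => congrArg Subtype.val (@H ⟨i, hi⟩ ⟨j, hj⟩ hij)⟩
  have hfac : ((k - w).factorial : ℝ) / k.factorial = 1 / k.descFactorial w := by
    rw [← Nat.factorial_mul_descFactorial hw, Nat.cast_mul,
      div_mul_cancel_left₀ (by positivity), one_div]
  rw [urnPMF, hfac, one_div_pow, div_mul_div_comm, one_mul, if_congr hinj rfl rfl]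

theorem urnPMF_nonneg (y : Fin k → Fin k) : 0 ≤ urnPMF k w y := by
  unfold urnPMF
  split_ifs <;> positivity

theorem sum_urnPMF_mul (hw : w ≤ k) (F : (Fin k → Fin k) → ℝ) :
    ∑ y, urnPMF k w y * F y =
      (∑ g : UrnHead k w ↪ Fin k, ∑ h : UrnTail k w → Fin k, F ((urnSplit k w).symm (g, h)))
        / (k.descFactorial w * k ^ (k - w)) := by
  rw [← (urnSplit k w).symm.sum_comp, Fintype.sum_prod_type]
  simp only [urnPMF_eq hw, Equiv.apply_symm_apply, ite_mul, zero_mul, sum_ite_irrel,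
    sum_const_zero, ← mul_sum]
  rw [← sum_filter, ← mul_sum, one_div_mul_eq_div, sum_subtype _ fun g => mem_filter_univ g,
    ← (Equiv.subtypeInjectiveEquivEmbedding (UrnHead k w) (Fin k)).symm.sum_comp]
  rfl

theorem sum_card_isolated_le (hw : w ≤ k) (g : UrnHead k w ↪ Fin k) :
    ∑ h : UrnTail k w → Fin k,
      #{i | ¬∃ j, j ≠ i ∧ (urnSplit k w).symm (g, h) j = (urnSplit k w).symm (g, h) i}
      ≤ w * (k - 1) ^ (k - w) + (k - w) * ((k - w) * (k - 1) ^ (k - w - 1)) := by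
  set y := fun h => (urnSplit k w).symm (g, h)
  have head : ∀ a : UrnHead k w,
      #{h | ¬∃ j, j ≠ a.1 ∧ y h j = y h a} ≤ (k - 1) ^ (k - w) := by
    intro a
    calc #{h | ¬∃ j, j ≠ a.1 ∧ y h j = y h a}
        ≤ #{h : UrnTail k w → Fin k | ∀ b, h b ≠ g a} := by
          refine card_le_card fun h hh => mem_filter.2 ⟨mem_univ h, fun b hb => ?_⟩
          refine (mem_filter.1 hh).2 ⟨b, fun hba => b.2 (hba ▸ a.2), ?_⟩
          simp only [y, urnSplit_symm_apply_tail, urnSplit_symm_apply_head, hb]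
      _ = (k - 1) ^ (k - w) := by
          rw [card_filter_forall_ne, Fintype.card_fin, card_urnTail hw]
  have tail : ∀ b : UrnTail k w,
      #{h | ¬∃ j, j ≠ b.1 ∧ y h j = y h b} ≤ (k - w) * (k - 1) ^ (k - w - 1) := by
    intro b
    calc #{h | ¬∃ j, j ≠ b.1 ∧ y h j = y h b}
        ≤ #{h : UrnTail k w → Fin k | h b ∉ univ.map g ∧ ∀ b' ≠ b, h b' ≠ h b} := by
          refine card_le_card fun h hh => mem_filter.2 ⟨mem_univ h, ?_, fun b' hb' hb'b => ?_⟩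
          · rw [mem_map]
            rintro ⟨a, -, hab⟩
            refine (mem_filter.1 hh).2 ⟨a, fun hab' => b.2 (hab' ▸ a.2), ?_⟩
            simp only [y, urnSplit_symm_apply_tail, urnSplit_symm_apply_head, hab]
          · refine (mem_filter.1 hh).2 ⟨b', fun h' => hb' (Subtype.ext h'), ?_⟩
            simp only [y, urnSplit_symm_apply_tail, hb'b]
      _ ≤ (k - w) * (k - 1) ^ (k - w - 1) := by
          refine (card_filter_isolated_le _ b).trans_eq ?_
          rw [card_map, card_univ, card_urnHead hw, Fintype.card_fin, card_urnTail hw]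
  simp only [card_filter]
  rw [sum_comm, ← Fintype.sum_subtype_add_sum_subtype (fun i : Fin k => (i : ℕ) < w)]
  simp only [← card_filter]
  gcongr
  · refine (sum_le_sum fun a _ => head a).trans_eq ?_
    rw [sum_const, card_univ, card_urnHead hw, smul_eq_mul]
  · refine (sum_le_sum fun b _ => tail b).trans_eq ?_
    rw [sum_const, card_univ, card_urnTail hw, smul_eq_mul]

/-- `k` minus the expected number of isolated coordinates when the head is injective: a head
coordinate is isolated with probability `(1 - 1/k)^(k-w)`, a tail coordinate with probability
`((k - w)/k) (1 - 1/k)^(k-w-1)`. -/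
noncomputable def urnCollisionBound (k w : ℕ) : ℝ :=
  k - w * (1 - 1 / k) ^ (k - w) - (k - w) * ((k - w) / k) * (1 - 1 / k) ^ (k - w - 1)

theorem urnCollisionBound_le_expected_collisions (hwk : w < k) :
    urnCollisionBound k w ≤ ∑ y, urnPMF k w y * #{i | ∃ j, j ≠ i ∧ y j = y i} := by
  have hcollide : ∀ y : Fin k → Fin k,
      (#{i | ∃ j, j ≠ i ∧ y j = y i} : ℝ) = k - #{i | ¬∃ j, j ≠ i ∧ y j = y i} := by
    intro y
    rw [eq_sub_iff_add_eq, ← Nat.cast_add, card_filter_add_card_filter_not, card_univ,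
      Fintype.card_fin]
  have hk : 1 ≤ k := by omega
  have hK : (0 : ℝ) < k := by exact_mod_cast hk
  have hD : (0 : ℝ) < k.descFactorial w := by exact_mod_cast Nat.descFactorial_pos.2 hwk.le
  rw [sum_urnPMF_mul hwk.le, le_div_iff₀ (by positivity)]
  calc _ = ∑ _g : UrnHead k w ↪ Fin k, ((k : ℝ) * k ^ (k - w) -
        ((w * (k - 1) ^ (k - w) + (k - w) * ((k - w) * (k - 1) ^ (k - w - 1)) : ℕ) : ℝ)) := by
        rw [sum_const, card_univ, Fintype.card_embedding_eq, Fintype.card_fin,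
          card_urnHead hwk.le, nsmul_eq_mul]
        obtain ⟨n, hn⟩ : ∃ n, k - w = n + 1 := ⟨k - w - 1, by omega⟩
        simp only [urnCollisionBound, ← Nat.cast_sub hwk.le, hn, Nat.add_sub_cancel]
        push_cast [Nat.cast_sub hk]
        rw [one_sub_div hK.ne', div_pow, div_pow]
        field_simp
        ring
    _ ≤ _ := by
        refine sum_le_sum fun g _ => ?_
        simp only [hcollide]
        rw [sum_sub_distrib, sum_const, card_univ, Fintype.card_fun, card_urnTail hwk.le,
          Fintype.card_fin, nsmul_eq_mul, Nat.cast_pow, mul_comm, ← Nat.cast_sum]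
        exact sub_le_sub_left (Nat.cast_le.2 (sum_card_isolated_le hwk.le g)) _

end Urn

namespace Real

theorem exp_le_one_add_mul {x : ℝ} (hx0 : 0 ≤ x) (hx1 : x ≤ 1) :
    exp x ≤ 1 + (exp 1 - 1) * x := by
  have h := convexOn_exp.2 (Set.mem_univ 0) (Set.mem_univ 1) (sub_nonneg.2 hx1) hx0
    (sub_add_cancel 1 x)
  simp only [smul_eq_mul, mul_zero, mul_one, zero_add, exp_zero] at h
  linarith

theorem exp_sub_one_mul_two_sub_le {x : ℝ} (hx0 : 0 ≤ x) (hx2 : x ≤ 2) :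
    (exp x - 1) * (2 - x) ≤ x * exp 1 := by
  have hlow : (1 - x) * exp x ≤ 1 := by
    calc (1 - x) * exp x ≤ exp (-x) * exp x := by gcongr; exact one_sub_le_exp_neg x
      _ = 1 := by rw [← exp_add, neg_add_cancel, exp_zero]
  have hup : (2 - x) * exp x ≤ exp 1 := by
    calc (2 - x) * exp x ≤ exp (1 - x) * exp x := by
          gcongr; linarith [add_one_le_exp (1 - x)]
      _ = exp 1 := by rw [← exp_add, sub_add_cancel]
  nlinarith

theorem exp_one_div_sub_one_mul_add_le {K m : ℝ} (hK : 1 ≤ K) (hm : m ≤ K - 1) :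
    (exp (1 / K) - 1) * (K + m) ≤ exp 1 := by
  have hK0 : 0 < K := by linarith
  have hx1 : 1 / K ≤ 1 := div_le_one_of_le₀ hK hK0.le
  have h := exp_sub_one_mul_two_sub_le (x := 1 / K) (by positivity) (by linarith)
  calc (exp (1 / K) - 1) * (K + m) ≤ (exp (1 / K) - 1) * (K * (2 - 1 / K)) := by
        gcongr
        · linarith [add_one_le_exp (1 / K), show 0 ≤ 1 / K by positivity]
        · rw [mul_sub, mul_one_div_cancel hK0.ne']
          linarith
    _ = K * ((exp (1 / K) - 1) * (2 - 1 / K)) := by ring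
    _ ≤ K * (1 / K * exp 1) := by gcongr
    _ = exp 1 := by field_simp

theorem one_sub_inv_pow_pred_le_exp {k : ℕ} (hk : 1 ≤ k) :
    (1 - 1 / k : ℝ) ^ (k - 1) ≤ exp (1 / k) / exp 1 := by
  have hq : 0 ≤ 1 - 1 / (k : ℝ) :=
    sub_nonneg.2 (div_le_one_of_le₀ (by exact_mod_cast hk) (Nat.cast_nonneg k))
  calc (1 - 1 / k : ℝ) ^ (k - 1) ≤ exp (-(1 / k)) ^ (k - 1) :=
        pow_le_pow_left₀ hq (one_sub_le_exp_neg _) _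
    _ = exp (1 / k) / exp 1 := by
        rw [← exp_nat_mul, ← exp_sub]
        congr 1
        push_cast [Nat.cast_sub hk]
        field_simp
        ring

theorem one_sub_inv_exp_nonneg : 0 ≤ 1 - 1 / exp 1 :=
  sub_nonneg.2 (div_le_one_of_le₀ (one_le_exp zero_le_one) (exp_pos 1).le)

end Real

theorem one_sub_inv_pow_mul_add_le {K : ℝ} (hK : 1 ≤ K) (n : ℕ) :
    (1 - 1 / K) ^ n * (K + n) ≤ K := by
  have hK0 : 0 < K := by linarith
  have hbern : 1 + n * (1 / K) ≤ (1 + 1 / K) ^ n :=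
    one_add_mul_le_pow (by linarith [show 0 < 1 / K by positivity]) n
  have hq : 0 ≤ 1 - 1 / K := sub_nonneg.2 (div_le_one_of_le₀ hK hK0.le)
  have hprod : ((1 - 1 / K) * (1 + 1 / K)) ^ n ≤ 1 := by
    have h : (1 - 1 / K) * (1 + 1 / K) = 1 - (1 / K) ^ 2 := by ring
    rw [h]
    exact pow_le_one₀ (by nlinarith [div_le_one_of_le₀ hK hK0.le, show 0 < 1 / K by positivity])
      (by nlinarith)
  calc (1 - 1 / K) ^ n * (K + n) = K * ((1 - 1 / K) ^ n * (1 + n * (1 / K))) := by field_simp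
    _ ≤ K * ((1 - 1 / K) ^ n * (1 + 1 / K) ^ n) := by gcongr
    _ ≤ K := by
        rw [← mul_pow]
        exact mul_le_of_le_one_right hK0.le hprod

section CollisionBound

open Real

theorem one_sub_inv_exp_mul_pred_le_urnCollisionBound_zero {k : ℕ} (hk : 1 ≤ k) :
    (1 - 1 / exp 1) * (k - 1) ≤ urnCollisionBound k 0 := by
  have hK : (0 : ℝ) < k := by exact_mod_cast hk
  have hconv : (k : ℝ) * exp (1 / k) ≤ k - 1 + exp 1 := by
    have h := exp_le_one_add_mul (x := 1 / k) (by positivity)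
      (div_le_one_of_le₀ (by exact_mod_cast hk) hK.le)
    calc (k : ℝ) * exp (1 / k) ≤ k * (1 + (exp 1 - 1) * (1 / k)) := by gcongr
      _ = k - 1 + exp 1 := by field_simp; ring
  have hpow : (k : ℝ) * (1 - 1 / k) ^ (k - 1) ≤ (k - 1 + exp 1) / exp 1 := by
    calc (k : ℝ) * (1 - 1 / k) ^ (k - 1) ≤ k * (exp (1 / k) / exp 1) := by
          gcongr; exact one_sub_inv_pow_pred_le_exp hk
      _ ≤ (k - 1 + exp 1) / exp 1 := by rw [mul_div_assoc']; gcongr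
  have hE : exp 1 ≠ 0 := (exp_pos 1).ne'
  simp only [urnCollisionBound, Nat.cast_zero, zero_mul, sub_zero, div_self hK.ne', mul_one,
    Nat.sub_zero]
  rw [add_div, div_self hE] at hpow
  linarith [show (1 - 1 / exp 1) * (k - 1) = k - 1 - (k - 1) / exp 1 by ring]

/- Bernoulli turns `(k - w)/k` into `(1 - 1/k)^w`, so the tail term is at most
`(k - w) e^(1/k - 1)`; its excess over `(k - w)/e` is paid for by the head term, as `w ≥ 1`. -/
theorem one_sub_inv_exp_mul_le_urnCollisionBound {k w : ℕ} (hw : 1 ≤ w) (hwk : w < k) :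
    (1 - 1 / exp 1) * (k - w) ≤ urnCollisionBound k w := by
  have hK1 : (1 : ℝ) ≤ k := by exact_mod_cast hw.trans hwk.le
  have hK : (0 : ℝ) < k := by linarith
  have hW : (1 : ℝ) ≤ w := by exact_mod_cast hw
  have hWK : (w : ℝ) + 1 ≤ k := by exact_mod_cast hwk
  set q : ℝ := 1 - 1 / k with hq_def
  set M : ℝ := k - w with hM_def
  have hM0 : 0 ≤ M := by rw [hM_def]; linarith
  have hq0 : 0 ≤ q := sub_nonneg.2 (div_le_one_of_le₀ hK1 hK.le)
  have hqM : q ^ (k - w) * (k + M) ≤ k := by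
    have h := one_sub_inv_pow_mul_add_le hK1 (k - w)
    rwa [Nat.cast_sub hwk.le] at h
  have hbern : M / k ≤ q ^ w := by
    have h := one_add_mul_le_pow (a := -(1 / (k : ℝ)))
      (by linarith [div_le_one_of_le₀ hK1 hK.le]) w
    calc M / k = 1 + w * -(1 / k) := by rw [hM_def]; field_simp; ring
      _ ≤ q ^ w := by rwa [← sub_eq_add_neg] at h
  have htail : M * (M / k) * q ^ (k - w - 1) ≤ M * (exp (1 / k) / exp 1) := by
    calc M * (M / k) * q ^ (k - w - 1) ≤ M * q ^ w * q ^ (k - w - 1) := by gcongr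
      _ = M * q ^ (k - 1) := by rw [mul_assoc, ← pow_add]; congr 2; omega
      _ ≤ M * (exp (1 / k) / exp 1) := by
          gcongr
          exact one_sub_inv_pow_pred_le_exp (by omega)
  have hgap : (exp (1 / k) - 1) * (k + M) ≤ exp 1 :=
    exp_one_div_sub_one_mul_add_le hK1 (by rw [hM_def]; linarith)
  have hexp : M * (exp (1 / k) / exp 1) ≤ M / exp 1 + M / (k + M) := by
    calc M * (exp (1 / k) / exp 1) = M / exp 1 + M * ((exp (1 / k) - 1) / exp 1) := by ring
      _ ≤ M / exp 1 + M * (1 / (k + M)) := by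
          gcongr M / exp 1 + M * ?_
          rw [div_le_div_iff₀ (exp_pos 1) (by linarith)]
          linarith
      _ = M / exp 1 + M / (k + M) := by ring
  have hhead : M / (k + M) ≤ w * (1 - q ^ (k - w)) := by
    have h : M / (k + M) ≤ 1 - q ^ (k - w) := by
      rw [div_le_iff₀ (by linarith)]
      linarith
    exact h.trans (le_mul_of_one_le_left (le_trans (by positivity) h) hW)
  simp only [urnCollisionBound, ← hq_def, ← hM_def]
  linarith [show (1 - 1 / exp 1) * M = M - M / exp 1 by ring]

theorem one_sub_inv_exp_mul_min_le_urnCollisionBound {k w : ℕ} (hwk : w < k) :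
    (1 - 1 / exp 1) * min ((k : ℝ) - w) (k - 1) ≤ urnCollisionBound k w := by
  rcases Nat.eq_zero_or_pos w with rfl | hw
  · refine le_trans ?_ (one_sub_inv_exp_mul_pred_le_urnCollisionBound_zero hwk)
    exact mul_le_mul_of_nonneg_left (min_le_right _ _) one_sub_inv_exp_nonneg
  · refine le_trans ?_ (one_sub_inv_exp_mul_le_urnCollisionBound hw hwk)
    exact mul_le_mul_of_nonneg_left (min_le_left _ _) one_sub_inv_exp_nonneg

end CollisionBound

theorem stmt18_general (k : ℕ) (hk : 1 ≤ k) (l : ℝ) (hl0 : 0 ≤ l) :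
    (l + 1 / (k : ℝ) ≤ 1 →
      ∑ y : Fin k → Fin k, urnPMF k ⌈l * (k : ℝ)⌉₊ y *
          ((Finset.univ.filter (fun i => ∃ j, j ≠ i ∧ y j = y i)).card : ℝ)
        ≥ (k : ℝ) * (1 - 1 / Real.exp 1) * (1 - l - 1 / (k : ℝ)))
    ∧ ∑ y : Fin k → Fin k, urnPMF k ⌈l * (k : ℝ)⌉₊ y *
          ((Finset.univ.filter (fun i => ∃ j, j ≠ i ∧ y j = y i)).card : ℝ)
        ≥ max ((k : ℝ) * (1 - 1 / Real.exp 1) * (1 - l - 1 / (k : ℝ))) 0 := by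
  have hK : (0 : ℝ) < k := by exact_mod_cast hk
  have htarget : (k : ℝ) * (1 - 1 / Real.exp 1) * (1 - l - 1 / k)
      = (1 - 1 / Real.exp 1) * (k - l * k - 1) := by
    field_simp
  have part1 : l + 1 / (k : ℝ) ≤ 1 → (k : ℝ) * (1 - 1 / Real.exp 1) * (1 - l - 1 / k)
      ≤ ∑ y, urnPMF k ⌈l * k⌉₊ y * #{i | ∃ j, j ≠ i ∧ y j = y i} := by
    intro hl
    have hlk : l * k ≤ ((k - 1 : ℕ) : ℝ) := by
      rw [Nat.cast_sub hk, Nat.cast_one]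
      nlinarith [mul_one_div_cancel hK.ne']
    have hwk : ⌈l * k⌉₊ < k := by
      have := Nat.ceil_le.2 hlk
      omega
    have hceil : (⌈l * k⌉₊ : ℝ) < l * k + 1 := Nat.ceil_lt_add_one (by positivity)
    rw [htarget]
    refine le_trans ?_ ((one_sub_inv_exp_mul_min_le_urnCollisionBound hwk).trans
      (urnCollisionBound_le_expected_collisions hwk))
    gcongr
    · exact Real.one_sub_inv_exp_nonneg
    · exact le_min (by linarith) (by nlinarith)
  have hnonneg : 0 ≤ ∑ y, urnPMF k ⌈l * k⌉₊ y * #{i | ∃ j, j ≠ i ∧ y j = y i} :=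
    sum_nonneg fun y _ => mul_nonneg (urnPMF_nonneg y) (Nat.cast_nonneg _)
  refine ⟨part1, max_le ?_ hnonneg⟩
  by_cases hl : l + 1 / (k : ℝ) ≤ 1
  · exact part1 hl
  · refine le_trans ?_ hnonneg
    exact mul_nonpos_of_nonneg_of_nonpos (mul_nonneg hK.le Real.one_sub_inv_exp_nonneg)
      (by linarith)

/-- For the urn sequence with `w = ⌈λk⌉`, the expected number `E[D]` of coordinates
involved in a collision satisfies `E[D] ≥ k(1 − 1/e)(1 − λ − 1/k)` when
`λ + 1/k ≤ 1`, and `E[D] ≥ max{k(1 − 1/e)(1 − λ − 1/k), 0}` in general. -/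
theorem stmt18 (k : ℕ) (hk : 1 ≤ k) (l : ℝ) (hl0 : 0 ≤ l) (hl1 : l ≤ 1) :
    (l + 1 / (k : ℝ) ≤ 1 →
      ∑ y : Fin k → Fin k, urnPMF k ⌈l * (k : ℝ)⌉₊ y *
          ((Finset.univ.filter (fun i => ∃ j, j ≠ i ∧ y j = y i)).card : ℝ)
        ≥ (k : ℝ) * (1 - 1 / Real.exp 1) * (1 - l - 1 / (k : ℝ)))
    ∧ ∑ y : Fin k → Fin k, urnPMF k ⌈l * (k : ℝ)⌉₊ y *
          ((Finset.univ.filter (fun i => ∃ j, j ≠ i ∧ y j = y i)).card : ℝ)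
        ≥ max ((k : ℝ) * (1 - 1 / Real.exp 1) * (1 - l - 1 / (k : ℝ))) 0 :=
  stmt18_general k hk l hl0
end
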